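/- arXiv:2309.13350 — 4 statements merged into one kernel-verified Lean document; each statement's English description precedes it below -/
import Mathlib

section
/- Let α ∈ [0,1) and I = (0,1). If φ ∈ X_α(I) (i.e., φ ∈ L²(I) with x^(α/2) φ' ∈ L²(I) distributionally), then φ is essentially bounded on I and ‖φ‖_{L^∞(I)} ≤ C ‖φ‖_{X_α(I)} for a constant C depending only on α. -/
open MeasureTheory Set Real

theorem stmt_3 (α : ℝ) (hα0 : 0 ≤ α) (hα1 : α < 1) :
    ∃ C : ℝ, 0 < C ∧
      ∀ (φ φ' : ℝ → ℂ),
        (∀ x ∈ Ioo (0:ℝ) 1, HasDerivAt φ (φ' x) x) →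
        IntegrableOn (fun x => ‖φ x‖ ^ 2) (Ioo (0:ℝ) 1) →
        IntegrableOn (fun x => x ^ α * ‖φ' x‖ ^ 2) (Ioo (0:ℝ) 1) →
        ∀ᵐ x ∂(volume.restrict (Ioo (0:ℝ) 1)),
          ‖φ x‖ ≤ C * ((∫ t in Ioo (0:ℝ) 1, ‖φ t‖ ^ 2) +
            ∫ t in Ioo (0:ℝ) 1, t ^ α * ‖φ' t‖ ^ 2) ^ ((1:ℝ)/2) := by
  have h1α : (0:ℝ) < 1 - α := by linarith
  refine ⟨Real.sqrt (2 + 2 / (1 - α)), Real.sqrt_pos.mpr (by positivity), ?_⟩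
  intro φ φ' hderiv hB hD
  set μ := volume.restrict (Ioo (0:ℝ) 1) with hμdef
  set B := ∫ t in Ioo (0:ℝ) 1, ‖φ t‖ ^ 2 with hBdef
  set D := ∫ t in Ioo (0:ℝ) 1, t ^ α * ‖φ' t‖ ^ 2 with hDdef
  have hB0 : 0 ≤ B := setIntegral_nonneg measurableSet_Ioo fun t _ => by positivity
  have hD0 : 0 ≤ D := setIntegral_nonneg measurableSet_Ioo fun t ht => by
    have h0t : (0:ℝ) < t := ht.1
    positivity
  -- measurability of φ'
  have hmeas : AEStronglyMeasurable φ' μ := by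
    have h1 : (fun x => deriv φ x) =ᵐ[μ] φ' := by
      filter_upwards [ae_restrict_mem measurableSet_Ioo] with x hx
      exact (hderiv x hx).deriv
    exact (stronglyMeasurable_deriv φ).aestronglyMeasurable.congr h1
  -- integrability of t ^ (-α) on (0,1)
  have hint_neg : IntegrableOn (fun t : ℝ => t ^ (-α)) (Ioo (0:ℝ) 1) := by
    have h := intervalIntegral.intervalIntegrable_rpow' (show (-1:ℝ) < -α by linarith) (a := (0:ℝ)) (b := 1)
    rw [intervalIntegrable_iff_integrableOn_Ioc_of_le (by norm_num : (0:ℝ) ≤ 1)] at h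
    exact h.mono_set Ioo_subset_Ioc_self
  -- value of that integral
  have hI1 : ∫ t in Ioo (0:ℝ) 1, t ^ (-α) = 1 / (1 - α) := by
    rw [← integral_Ioc_eq_integral_Ioo,
      ← intervalIntegral.integral_of_le (by norm_num : (0:ℝ) ≤ 1),
      integral_rpow (Or.inl (by linarith))]
    rw [Real.one_rpow, Real.zero_rpow (by linarith : -α + 1 ≠ 0)]
    ring
  -- Memℒp of the two factors
  have hcont : ∀ c : ℝ, ContinuousOn (fun t : ℝ => t ^ c) (Ioo (0:ℝ) 1) := fun c =>
    ContinuousOn.rpow_const continuousOn_id fun x hx => Or.inl (ne_of_gt hx.1)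
  have hfmeas : AEStronglyMeasurable (fun t : ℝ => t ^ (-(α/2))) μ :=
    (hcont _).aestronglyMeasurable measurableSet_Ioo
  have hgmeas : AEStronglyMeasurable (fun t : ℝ => t ^ (α/2) * ‖φ' t‖) μ :=
    ((hcont _).aestronglyMeasurable measurableSet_Ioo).mul hmeas.norm
  have hf2 : MemLp (fun t : ℝ => t ^ (-(α/2))) 2 μ := by
    rw [memLp_two_iff_integrable_sq hfmeas]
    refine hint_neg.congr ?_
    filter_upwards [ae_restrict_mem measurableSet_Ioo] with t ht
    rw [← Real.rpow_natCast (t ^ (-(α/2))) 2, ← Real.rpow_mul ht.1.le]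
    norm_num
  have hg2 : MemLp (fun t : ℝ => t ^ (α/2) * ‖φ' t‖) 2 μ := by
    rw [memLp_two_iff_integrable_sq hgmeas]
    refine hD.congr ?_
    filter_upwards [ae_restrict_mem measurableSet_Ioo] with t ht
    rw [mul_pow, ← Real.rpow_natCast (t ^ (α/2)) 2, ← Real.rpow_mul ht.1.le]
    norm_num
  -- integrability of ‖φ'‖
  have hprodeq : (fun t : ℝ => t ^ (-(α/2)) * (t ^ (α/2) * ‖φ' t‖)) =ᵐ[μ]
      fun t => ‖φ' t‖ := by
    filter_upwards [ae_restrict_mem measurableSet_Ioo] with t ht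
    rw [← mul_assoc, ← Real.rpow_add ht.1]
    simp
  have hint_norm : Integrable (fun t : ℝ => ‖φ' t‖) μ := by
    have hp : MemLp ((fun t : ℝ => t ^ (-(α/2))) • fun t : ℝ => t ^ (α/2) * ‖φ' t‖) 1 μ :=
      hg2.smul hf2 (p := 2) (q := 2) (r := 1) (hpqr := ⟨by norm_num [ENNReal.inv_two_add_inv_two]⟩)
    refine (memLp_one_iff_integrable.mp hp).congr ?_
    refine (Filter.EventuallyEq.trans ?_ hprodeq)
    exact Filter.Eventually.of_forall fun t => by simp [Pi.smul_apply, smul_eq_mul]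
  have hint : IntegrableOn φ' (Ioo (0:ℝ) 1) := by
    rw [IntegrableOn, ← integrable_norm_iff hmeas]
    exact hint_norm
  set A := ∫ t in Ioo (0:ℝ) 1, ‖φ' t‖ with hAdef
  have hA0 : 0 ≤ A := setIntegral_nonneg measurableSet_Ioo fun t _ => norm_nonneg _
  -- Cauchy-Schwarz bound for A
  have hAbound : A ^ 2 ≤ 1 / (1 - α) * D := by
    have hpq : (2:ℝ).HolderConjugate 2 := Real.HolderConjugate.two_two
    have h2 : ENNReal.ofReal (2:ℝ) = 2 := by norm_num
    have hH := integral_mul_le_Lp_mul_Lq_of_nonneg hpq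
      (f := fun t : ℝ => t ^ (-(α/2))) (g := fun t : ℝ => t ^ (α/2) * ‖φ' t‖)
      (μ := μ)
      (by filter_upwards [ae_restrict_mem measurableSet_Ioo] with t ht
          exact Real.rpow_nonneg ht.1.le _)
      (by filter_upwards [ae_restrict_mem measurableSet_Ioo] with t ht
          exact mul_nonneg (Real.rpow_nonneg ht.1.le _) (norm_nonneg _))
      (h2 ▸ hf2) (h2 ▸ hg2)
    have hL : ∫ a, (fun t : ℝ => t ^ (-(α/2))) a * (fun t : ℝ => t ^ (α/2) * ‖φ' t‖) a ∂μ
        = A := integral_congr_ae hprodeq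
    have hR1 : ∫ a, (fun t : ℝ => t ^ (-(α/2))) a ^ (2:ℝ) ∂μ = 1 / (1 - α) := by
      rw [← hI1]
      refine integral_congr_ae ?_
      filter_upwards [ae_restrict_mem measurableSet_Ioo] with t ht
      rw [← Real.rpow_mul ht.1.le]
      norm_num
    have hR2 : ∫ a, (fun t : ℝ => t ^ (α/2) * ‖φ' t‖) a ^ (2:ℝ) ∂μ = D := by
      rw [hDdef]
      refine integral_congr_ae ?_
      filter_upwards [ae_restrict_mem measurableSet_Ioo] with t ht
      have h1 : ((t:ℝ) ^ (α/2) * ‖φ' t‖) ^ (2:ℝ) = (t ^ (α/2) * ‖φ' t‖) ^ (2:ℕ) := by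
        rw [← Real.rpow_natCast (t ^ (α/2) * ‖φ' t‖) 2]; norm_num
      rw [h1, mul_pow, ← Real.rpow_natCast (t ^ (α/2)) 2, ← Real.rpow_mul ht.1.le,
        show α/2*(2:ℕ) = α by push_cast; ring]
    rw [hL, hR1, hR2] at hH
    have hsq : ((1 / (1 - α)) ^ ((1:ℝ)/2) * D ^ ((1:ℝ)/2)) ^ 2 = 1 / (1 - α) * D := by
      rw [mul_pow, ← Real.rpow_natCast ((1 / (1 - α)) ^ ((1:ℝ)/2)) 2,
        ← Real.rpow_natCast (D ^ ((1:ℝ)/2)) 2,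
        ← Real.rpow_mul (by positivity), ← Real.rpow_mul hD0]
      norm_num
    calc A ^ 2 ≤ ((1 / (1 - α)) ^ ((1:ℝ)/2) * D ^ ((1:ℝ)/2)) ^ 2 := by
          apply pow_le_pow_left₀ hA0
          convert hH using 2 <;> norm_num
      _ = 1 / (1 - α) * D := hsq
  -- FTC bound on differences
  have hdiff : ∀ x ∈ Ioo (0:ℝ) 1, ∀ y ∈ Ioo (0:ℝ) 1, ‖φ x - φ y‖ ≤ A := by
    have key : ∀ x ∈ Ioo (0:ℝ) 1, ∀ y ∈ Ioo (0:ℝ) 1, y ≤ x → ‖φ x - φ y‖ ≤ A := by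
      intro x hx y hy hyx
      have hsub : Icc y x ⊆ Ioo (0:ℝ) 1 := fun t ht =>
        ⟨lt_of_lt_of_le hy.1 ht.1, lt_of_le_of_lt ht.2 hx.2⟩
      have hii : IntervalIntegrable φ' volume y x := by
        refine (hint.mono_set ?_).intervalIntegrable
        rw [uIcc_of_le hyx]; exact hsub
      have hftc := intervalIntegral.integral_eq_sub_of_hasDerivAt
        (f := φ) (f' := φ')
        (fun t ht => hderiv t (hsub (by rwa [uIcc_of_le hyx] at ht))) hii
      rw [← hftc]
      calc ‖∫ t in y..x, φ' t‖ ≤ ∫ t in y..x, ‖φ' t‖ :=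
            intervalIntegral.norm_integral_le_integral_norm hyx
        _ ≤ A := by
            rw [intervalIntegral.integral_of_le hyx]
            refine setIntegral_mono_set hint_norm ?_ ?_
            · exact Filter.Eventually.of_forall fun t => norm_nonneg _
            · refine HasSubset.Subset.eventuallyLE fun t ht =>
                ⟨lt_trans hy.1 ht.1, lt_of_le_of_lt ht.2 hx.2⟩
    intro x hx y hy
    rcases le_total y x with h | h
    · exact key x hx y hy h
    · rw [norm_sub_rev]; exact key y hy x hx h
  -- main pointwise bound via averaging
  have hmain : ∀ x ∈ Ioo (0:ℝ) 1, ‖φ x‖ ^ 2 ≤ 2 * B + 2 * A ^ 2 := by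
    intro x hx
    have hpt : ∀ y ∈ Ioo (0:ℝ) 1, ‖φ x‖ ^ 2 ≤ 2 * ‖φ y‖ ^ 2 + 2 * A ^ 2 := by
      intro y hy
      have h1 : ‖φ x‖ - ‖φ y‖ ≤ ‖φ x - φ y‖ := norm_sub_norm_le _ _
      have h2 := hdiff x hx y hy
      nlinarith [norm_nonneg (φ x), norm_nonneg (φ y), sq_nonneg (‖φ y‖ - A)]
    have hc : IntegrableOn (fun _ : ℝ => ‖φ x‖ ^ 2) (Ioo (0:ℝ) 1) :=
      integrableOn_const measure_Ioo_lt_top.ne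
    have hc2 : IntegrableOn (fun _ : ℝ => 2 * A ^ 2) (Ioo (0:ℝ) 1) :=
      integrableOn_const measure_Ioo_lt_top.ne
    have hmono := setIntegral_mono_on hc ((hB.const_mul 2).add hc2)
      measurableSet_Ioo (fun y hy => hpt y hy)
    have hvol : volume.real (Ioo (0:ℝ) 1) = 1 := by
      simp [Real.volume_real_Ioo]
    rw [setIntegral_const, hvol, one_smul] at hmono
    simp only [Pi.add_apply] at hmono
    rw [integral_add (hB.const_mul 2) hc2, integral_const_mul,
      setIntegral_const, hvol, one_smul] at hmono
    exact hmono.trans_eq rfl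
  -- conclude
  filter_upwards [ae_restrict_mem measurableSet_Ioo] with x hx
  have h2 := hmain x hx
  have hfin : ‖φ x‖ ^ 2 ≤ (2 + 2 / (1 - α)) * (B + D) := by
    have h3 : 2 * A ^ 2 ≤ 2 / (1 - α) * D := by
      have := hAbound
      rw [div_eq_mul_inv] at *
      nlinarith
    have h4 : 2 * B + 2 / (1 - α) * D ≤ (2 + 2 / (1 - α)) * (B + D) := by
      have h5 : 0 ≤ 2 / (1 - α) := by positivity
      nlinarith
    linarith
  rw [show ((B + D) ^ ((1:ℝ)/2)) = Real.sqrt (B + D) from (Real.sqrt_eq_rpow _).symm,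
    ← Real.sqrt_mul (by positivity)]
  exact Real.le_sqrt_of_sq_le hfin
end

section
/- Poincaré-type inequality: for α ∈ [0,1], there exists a constant C > 0 (depending on α) such that for every φ ∈ X_α(0,1) with φ(1) = 0, one has ∫₀¹ |φ|² dx ≤ C ∫₀¹ x^α |φ'(x)|² dx. -/
open MeasureTheory Set Real

set_option maxHeartbeats 1000000 in
theorem stmt_5 (α : ℝ) (hα0 : 0 ≤ α) (hα1 : α ≤ 1) :
    ∃ C : ℝ, 0 < C ∧
      ∀ (φ φ' : ℝ → ℂ),
        (∀ x ∈ Ioo (0:ℝ) 1, HasDerivAt φ (φ' x) x) →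
        ContinuousOn φ (Ioc (0:ℝ) 1) →
        IntegrableOn (fun x => ‖φ x‖ ^ 2) (Ioo (0:ℝ) 1) →
        IntegrableOn (fun x => x ^ α * ‖φ' x‖ ^ 2) (Ioo (0:ℝ) 1) →
        φ 1 = 0 →
        (∫ x in Ioo (0:ℝ) 1, ‖φ x‖ ^ 2) ≤ C * ∫ x in Ioo (0:ℝ) 1, x ^ α * ‖φ' x‖ ^ 2 := by
  refine ⟨4, by norm_num, ?_⟩
  intro φ φ' hderiv hcont hφint hφ'int hφ1
  set I : ℝ := ∫ x in Ioo (0:ℝ) 1, x ^ α * ‖φ' x‖ ^ 2 with hIdef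
  have hInn : 0 ≤ I :=
    setIntegral_nonneg measurableSet_Ioo fun t ht =>
      mul_nonneg (Real.rpow_nonneg ht.1.le α) (sq_nonneg _)
  have h2 : ENNReal.ofReal 2 = 2 := by norm_num
  have hconj : Real.HolderConjugate 2 2 := ⟨by norm_num, by norm_num, by norm_num⟩
  -- pointwise bound
  have key : ∀ x ∈ Ioo (0:ℝ) 1, ‖φ x‖ ^ 2 ≤ 2 * x ^ (-(1/2) : ℝ) * I := by
    rintro x ⟨hx0, hx1⟩
    have hsub : Ioo x 1 ⊆ Ioo (0:ℝ) 1 := Ioo_subset_Ioo hx0.le le_rfl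
    set μ := volume.restrict (Ioo x 1) with hμ
    have hmeas : AEStronglyMeasurable φ' μ := by
      refine (stronglyMeasurable_deriv φ).aestronglyMeasurable.congr ?_
      filter_upwards [ae_restrict_mem measurableSet_Ioo] with t ht
      exact (hderiv t (hsub ht)).deriv
    have hint1 : IntegrableOn (fun t => t ^ α * ‖φ' t‖ ^ 2) (Ioo x 1) :=
      hφ'int.mono_set hsub
    have hconst : IntegrableOn (fun _ : ℝ => (1:ℝ)) (Ioo x 1) :=
      integrableOn_const measure_Ioo_lt_top.ne
    have hxα : (0:ℝ) < x ^ α := Real.rpow_pos_of_pos hx0 α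
    have hφ'i : IntegrableOn φ' (Ioo x 1) := by
      have hgint : IntegrableOn (fun t => 1 + x ^ (-α) * (t ^ α * ‖φ' t‖ ^ 2)) (Ioo x 1) :=
        hconst.add (hint1.const_mul _)
      refine Integrable.mono' hgint hmeas ?_
      filter_upwards [ae_restrict_mem measurableSet_Ioo] with t ht
      have ht0 : 0 < t := lt_trans hx0 ht.1
      have h1 : x ^ α ≤ t ^ α := Real.rpow_le_rpow hx0.le ht.1.le hα0
      have hge1 : (1:ℝ) ≤ x ^ (-α) * t ^ α := by
        rw [Real.rpow_neg hx0.le, ← div_eq_inv_mul, le_div_iff₀ hxα, one_mul]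
        exact h1
      have hb : ‖φ' t‖ ≤ 1 + ‖φ' t‖ ^ 2 := by nlinarith [sq_nonneg (‖φ' t‖ - 1)]
      calc ‖φ' t‖ ≤ 1 + ‖φ' t‖ ^ 2 := hb
        _ ≤ 1 + x ^ (-α) * (t ^ α * ‖φ' t‖ ^ 2) := by
            rw [← mul_assoc]; nlinarith [sq_nonneg ‖φ' t‖]
    have hInt : IntervalIntegrable φ' volume x 1 :=
      (intervalIntegrable_iff_integrableOn_Ioo_of_le hx1.le).mpr hφ'i
    have hFTC : ∫ t in x..1, φ' t = φ 1 - φ x :=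
      intervalIntegral.integral_eq_sub_of_hasDerivAt_of_le hx1.le
        (hcont.mono fun t ht => ⟨lt_of_lt_of_le hx0 ht.1, ht.2⟩)
        (fun t ht => hderiv t ⟨lt_trans hx0 ht.1, ht.2⟩) hInt
    have hφx : ‖φ x‖ ≤ ∫ t in Ioo x 1, ‖φ' t‖ := by
      have he : ‖φ x‖ = ‖∫ t in x..1, φ' t‖ := by
        rw [hFTC, hφ1, zero_sub, norm_neg]
      rw [he]
      refine le_trans (intervalIntegral.norm_integral_le_integral_norm hx1.le) ?_
      rw [intervalIntegral.integral_of_le hx1.le, integral_Ioc_eq_integral_Ioo]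
    -- Cauchy-Schwarz
    set f : ℝ → ℝ := fun t => t ^ (-(1/2) : ℝ) with hfdef
    set g : ℝ → ℝ := fun t => t ^ ((1/2) : ℝ) * ‖φ' t‖ with hgdef
    have hfm : AEStronglyMeasurable f μ :=
      (show Measurable fun t : ℝ => t ^ (-(1/2) : ℝ) by fun_prop).aestronglyMeasurable
    have hgm : AEStronglyMeasurable g μ :=
      ((show Measurable fun t : ℝ => t ^ ((1/2) : ℝ) by fun_prop).aestronglyMeasurable.mul
        hmeas.norm)
    have hf0 : 0 ≤ᵐ[μ] f := by
      filter_upwards [ae_restrict_mem measurableSet_Ioo] with t ht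
      exact Real.rpow_nonneg (le_of_lt (lt_trans hx0 ht.1)) _
    have hg0 : 0 ≤ᵐ[μ] g := by
      filter_upwards [ae_restrict_mem measurableSet_Ioo] with t ht
      exact mul_nonneg (Real.rpow_nonneg (le_of_lt (lt_trans hx0 ht.1)) _) (norm_nonneg _)
    have hfMem : MemLp f (ENNReal.ofReal 2) μ := by
      rw [h2, memLp_two_iff_integrable_sq hfm]
      have hgint : IntegrableOn (fun _ : ℝ => x⁻¹) (Ioo x 1) :=
        integrableOn_const measure_Ioo_lt_top.ne
      refine Integrable.mono' hgint ((hfm.pow 2)) ?_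
      filter_upwards [ae_restrict_mem measurableSet_Ioo] with t ht
      have ht0 : 0 < t := lt_trans hx0 ht.1
      have : f t ^ 2 = t ^ (-1 : ℝ) := by
        rw [hfdef]
        rw [← Real.rpow_natCast (t ^ (-(1/2):ℝ)) 2, ← Real.rpow_mul ht0.le]
        norm_num
      rw [Real.norm_eq_abs, abs_of_nonneg (sq_nonneg _), this, Real.rpow_neg_one]
      exact inv_anti₀ hx0 ht.1.le
    have hgMem : MemLp g (ENNReal.ofReal 2) μ := by
      rw [h2, memLp_two_iff_integrable_sq hgm]
      refine Integrable.mono' hint1 (hgm.pow 2) ?_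
      filter_upwards [ae_restrict_mem measurableSet_Ioo] with t ht
      have ht0 : 0 < t := lt_trans hx0 ht.1
      have hsq : g t ^ 2 = t * ‖φ' t‖ ^ 2 := by
        rw [hgdef]
        simp only [mul_pow]
        rw [← Real.rpow_natCast (t ^ ((1/2):ℝ)) 2, ← Real.rpow_mul ht0.le]
        norm_num
      rw [Real.norm_eq_abs, abs_of_nonneg (sq_nonneg _), hsq]
      have htα : t ≤ t ^ α := by
        nth_rewrite 1 [← Real.rpow_one t]
        exact Real.rpow_le_rpow_of_exponent_ge ht0 ht.2.le hα1
      exact mul_le_mul_of_nonneg_right htα (sq_nonneg _)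
    have hHolder := integral_mul_le_Lp_mul_Lq_of_nonneg hconj hf0 hg0 hfMem hgMem
    have hJ : ∫ t in Ioo x 1, ‖φ' t‖ ≤
        (∫ t in Ioo x 1, f t ^ (2:ℝ)) ^ ((1:ℝ)/2) * (∫ t in Ioo x 1, g t ^ (2:ℝ)) ^ ((1:ℝ)/2) := by
      refine le_trans (le_of_eq ?_) hHolder
      refine setIntegral_congr_fun measurableSet_Ioo fun t ht => ?_
      have ht0 : 0 < t := lt_trans hx0 ht.1
      rw [hfdef, hgdef]
      simp only
      rw [← mul_assoc, ← Real.rpow_add ht0]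
      norm_num
    have hA : ∫ t in Ioo x 1, f t ^ (2:ℝ) = -Real.log x := by
      have hc : ∀ t ∈ Ioo x 1, f t ^ (2:ℝ) = t⁻¹ := by
        intro t ht
        have ht0 : 0 < t := lt_trans hx0 ht.1
        rw [hfdef]
        simp only
        rw [← Real.rpow_mul ht0.le]
        norm_num [Real.rpow_neg_one]
      rw [setIntegral_congr_fun measurableSet_Ioo hc, ← integral_Ioc_eq_integral_Ioo,
        ← intervalIntegral.integral_of_le hx1.le, integral_inv ?h0]
      · rw [one_div, Real.log_inv]
      case h0 =>
        rw [Set.uIcc_of_le hx1.le]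
        rintro ⟨hle, -⟩
        exact absurd hle (not_le.mpr hx0)
    have hB : ∫ t in Ioo x 1, g t ^ (2:ℝ) ≤ I := by
      have hc : ∀ t ∈ Ioo x 1, g t ^ (2:ℝ) = t * ‖φ' t‖ ^ 2 := by
        intro t ht
        have ht0 : 0 < t := lt_trans hx0 ht.1
        rw [hgdef]
        simp only
        rw [Real.mul_rpow (Real.rpow_nonneg ht0.le _) (norm_nonneg _),
          ← Real.rpow_mul ht0.le, show ((1:ℝ)/2 * 2) = 1 by norm_num, Real.rpow_one,
          show ((2:ℝ) = ((2:ℕ):ℝ)) by norm_num, Real.rpow_natCast]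
      rw [setIntegral_congr_fun measurableSet_Ioo hc]
      have hmono1 : ∫ t in Ioo x 1, t * ‖φ' t‖ ^ 2 ≤ ∫ t in Ioo x 1, t ^ α * ‖φ' t‖ ^ 2 := by
        refine setIntegral_mono_on ?_ hint1 measurableSet_Ioo fun t ht => ?_
        · refine Integrable.mono' hint1 ?_ ?_
          · exact (measurable_id.aestronglyMeasurable.mul (hmeas.norm.pow 2))
          · filter_upwards [ae_restrict_mem measurableSet_Ioo] with t ht
            have ht0 : 0 < t := lt_trans hx0 ht.1
            rw [Real.norm_eq_abs, abs_of_nonneg (mul_nonneg ht0.le (sq_nonneg _))]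
            have htα : t ≤ t ^ α := by
              nth_rewrite 1 [← Real.rpow_one t]
              exact Real.rpow_le_rpow_of_exponent_ge ht0 ht.2.le hα1
            exact mul_le_mul_of_nonneg_right htα (sq_nonneg _)
        · have ht0 : 0 < t := lt_trans hx0 ht.1
          have htα : t ≤ t ^ α := by
            nth_rewrite 1 [← Real.rpow_one t]
            exact Real.rpow_le_rpow_of_exponent_ge ht0 ht.2.le hα1
          exact mul_le_mul_of_nonneg_right htα (sq_nonneg _)
      refine hmono1.trans ?_
      refine setIntegral_mono_set hφ'int ?_ (HasSubset.Subset.eventuallyLE hsub)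
      filter_upwards [ae_restrict_mem measurableSet_Ioo] with t ht
      exact mul_nonneg (Real.rpow_nonneg ht.1.le α) (sq_nonneg _)
    -- combine
    have hlogx : 0 ≤ -Real.log x := by
      have := Real.log_nonpos hx0.le hx1.le
      linarith
    have hA0 : 0 ≤ ∫ t in Ioo x 1, f t ^ (2:ℝ) := by rw [hA]; exact hlogx
    have hB0 : 0 ≤ ∫ t in Ioo x 1, g t ^ (2:ℝ) :=
      setIntegral_nonneg measurableSet_Ioo fun t ht =>
        Real.rpow_nonneg
          (mul_nonneg (Real.rpow_nonneg (le_of_lt (lt_trans hx0 ht.1)) _) (norm_nonneg _)) _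
    have hφxAB : ‖φ x‖ ^ 2 ≤ (∫ t in Ioo x 1, f t ^ (2:ℝ)) * (∫ t in Ioo x 1, g t ^ (2:ℝ)) := by
      have h1 := hφx.trans hJ
      have h2' := pow_le_pow_left₀ (norm_nonneg (φ x)) h1 2
      refine h2'.trans (le_of_eq ?_)
      rw [mul_pow]
      congr 1
      · rw [← Real.rpow_natCast (_ ^ ((1:ℝ)/2)) 2, ← Real.rpow_mul hA0]; norm_num
      · rw [← Real.rpow_natCast (_ ^ ((1:ℝ)/2)) 2, ← Real.rpow_mul hB0]; norm_num
    have hlog2 : -Real.log x ≤ 2 * x ^ (-(1/2) : ℝ) := by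
      have hs : (0:ℝ) < x ^ ((1/2) : ℝ) := Real.rpow_pos_of_pos hx0 _
      have h1 := Real.log_le_sub_one_of_pos (inv_pos.mpr hs)
      rw [Real.log_inv] at h1
      have h2' := Real.log_rpow hx0 (1/2)
      rw [Real.rpow_neg hx0.le]
      have hinv : 0 < (x ^ ((1/2):ℝ))⁻¹ := inv_pos.mpr hs
      linarith
    calc ‖φ x‖ ^ 2 ≤ (∫ t in Ioo x 1, f t ^ (2:ℝ)) * (∫ t in Ioo x 1, g t ^ (2:ℝ)) := hφxAB
      _ ≤ (-Real.log x) * I := by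
          rw [hA]
          exact mul_le_mul_of_nonneg_left hB hlogx
      _ ≤ 2 * x ^ (-(1/2) : ℝ) * I := mul_le_mul_of_nonneg_right hlog2 hInn
  -- integrate the pointwise bound
  have hRHSint : IntegrableOn (fun x => 2 * x ^ (-(1/2) : ℝ) * I) (Ioo (0:ℝ) 1) := by
    have h := intervalIntegral.intervalIntegrable_rpow' (a := (0:ℝ)) (b := 1)
      (r := -(1/2)) (by norm_num)
    rw [intervalIntegrable_iff_integrableOn_Ioo_of_le zero_le_one] at h
    exact (h.const_mul 2).mul_const I
  have hval : ∫ x in Ioo (0:ℝ) 1, x ^ (-(1/2) : ℝ) = 2 := by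
    rw [← integral_Ioc_eq_integral_Ioo, ← intervalIntegral.integral_of_le zero_le_one,
      integral_rpow (Or.inl (by norm_num))]
    rw [Real.zero_rpow (by norm_num), Real.one_rpow]
    norm_num
  calc (∫ x in Ioo (0:ℝ) 1, ‖φ x‖ ^ 2)
      ≤ ∫ x in Ioo (0:ℝ) 1, 2 * x ^ (-(1/2) : ℝ) * I :=
        setIntegral_mono_on hφint hRHSint measurableSet_Ioo key
    _ = (2 * I) * ∫ x in Ioo (0:ℝ) 1, x ^ (-(1/2) : ℝ) := by
        rw [← integral_const_mul]
        refine setIntegral_congr_fun measurableSet_Ioo fun t ht => ?_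
        ring
    _ = 4 * I := by rw [hval]; ring
end

section
/- The equation tanh(τπ) = τ has exactly two nonzero real solutions, and they are negatives of each other; moreover the positive solution lies in (0,1). -/
open Real

private lemma hasDerivAt_my (x : ℝ) :
    HasDerivAt (fun t : ℝ => Real.tanh (t * π)) (π / Real.cosh (x * π) ^ 2) x := by
  have hc : Real.cosh (x * π) ≠ 0 := (Real.cosh_pos _).ne'
  have h1 : HasDerivAt (fun t : ℝ => t * π) π x := by
    simpa using (hasDerivAt_id x).mul_const π
  have hs : HasDerivAt (fun t : ℝ => Real.sinh (t * π)) (Real.cosh (x * π) * π) x :=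
    by have := (Real.hasDerivAt_sinh (x * π)).comp x h1; exact this
  have hcd : HasDerivAt (fun t : ℝ => Real.cosh (t * π)) (Real.sinh (x * π) * π) x :=
    by have := (Real.hasDerivAt_cosh (x * π)).comp x h1; exact this
  have hd : HasDerivAt (fun t : ℝ => Real.sinh (t * π) / Real.cosh (t * π))
      ((Real.cosh (x * π) * π * Real.cosh (x * π) -
        Real.sinh (x * π) * (Real.sinh (x * π) * π)) / Real.cosh (x * π) ^ 2) x :=
    hs.div hcd hc
  have heq : (fun t : ℝ => Real.sinh (t * π) / Real.cosh (t * π)) =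
      fun t : ℝ => Real.tanh (t * π) := by
    funext t; rw [Real.tanh_eq_sinh_div_cosh]
  rw [heq] at hd
  convert hd using 1
  have h2 : Real.cosh (x * π) ^ 2 - Real.sinh (x * π) ^ 2 = 1 :=
    Real.cosh_sq_sub_sinh_sq (x * π)
  have h3 : Real.cosh (x * π) * π * Real.cosh (x * π) -
      Real.sinh (x * π) * (Real.sinh (x * π) * π) = π := by linear_combination π * h2
  rw [h3]

private lemma continuous_tanh_my : Continuous Real.tanh := by
  rw [show Real.tanh = fun x => Real.sinh x / Real.cosh x from
    funext fun x => Real.tanh_eq_sinh_div_cosh x]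
  exact Real.continuous_sinh.div Real.continuous_cosh fun x => (Real.cosh_pos x).ne'

private lemma strictConcave_my :
    StrictConcaveOn ℝ (Set.Ici (0 : ℝ)) (fun t : ℝ => Real.tanh (t * π)) := by
  apply StrictAntiOn.strictConcaveOn_of_deriv (convex_Ici 0)
  · exact ((continuous_tanh_my).comp (continuous_id.mul continuous_const)).continuousOn
  · intro a ha b hb hab
    rw [interior_Ici] at ha hb
    have ha' : 0 < a := ha
    have hb' : 0 < b := hb
    rw [(hasDerivAt_my a).deriv, (hasDerivAt_my b).deriv]
    have hca : 0 < Real.cosh (a * π) := Real.cosh_pos _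
    have hcb : 0 < Real.cosh (b * π) := Real.cosh_pos _
    have : Real.cosh (a * π) < Real.cosh (b * π) := by
      rw [Real.cosh_lt_cosh]
      have hπ := Real.pi_pos
      rw [abs_of_pos (mul_pos ha' hπ), abs_of_pos (mul_pos hb' hπ)]
      exact mul_lt_mul_of_pos_right hab hπ
    have hsq : Real.cosh (a * π) ^ 2 < Real.cosh (b * π) ^ 2 := by nlinarith
    exact div_lt_div_of_pos_left Real.pi_pos (by positivity) hsq

private lemma tanh_lt_one_my (x : ℝ) : Real.tanh x < 1 := by
  rw [Real.tanh_eq_sinh_div_cosh, div_lt_one (Real.cosh_pos x)]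
  have := Real.cosh_sub_sinh x
  have := Real.exp_pos (-x)
  linarith

theorem stmt_10 :
    ∃ τ₀ : ℝ, 0 < τ₀ ∧ τ₀ < 1 ∧ Real.tanh (τ₀ * π) = τ₀ ∧
      ∀ τ : ℝ, τ ≠ 0 → (Real.tanh (τ * π) = τ ↔ τ = τ₀ ∨ τ = -τ₀) := by
  -- the function f t = tanh (t π) - t
  set f : ℝ → ℝ := fun t => Real.tanh (t * π) - t with hf
  have hfc : Continuous f :=
    (continuous_tanh_my.comp (continuous_id.mul continuous_const)).sub continuous_id
  -- f (1/2) > 0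
  have hhalf : 0 < f (1/2) := by
    have h3 : (3 : ℝ) < Real.exp π := by
      have : Real.exp 3 ≤ Real.exp π := Real.exp_le_exp.2 Real.pi_gt_three.le
      nlinarith [Real.add_one_le_exp (3 : ℝ)]
    have hx : (1/2 : ℝ) * π = π / 2 := by ring
    have hc : 0 < Real.cosh (π / 2) := Real.cosh_pos _
    have hs : Real.cosh (π / 2) < 2 * Real.sinh (π / 2) := by
      rw [Real.cosh_eq, Real.sinh_eq]
      have he : Real.exp (π / 2) * Real.exp (-(π / 2)) = 1 := by
        rw [← Real.exp_add]; simp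
      have hp : 0 < Real.exp (-(π / 2)) := Real.exp_pos _
      have : Real.exp (π / 2) ^ 2 = Real.exp π := by
        rw [sq, ← Real.exp_add, add_halves]
      nlinarith [Real.exp_pos (π / 2)]
    have : (1/2 : ℝ) < Real.tanh (π / 2) := by
      rw [Real.tanh_eq_sinh_div_cosh, lt_div_iff₀ hc]
      linarith
    simp only [hf, hx]
    linarith
  -- f 1 < 0
  have hone : f 1 < 0 := by
    have := tanh_lt_one_my (1 * π)
    simp only [hf]
    linarith
  -- IVT : root in Ioo (1/2) 1
  obtain ⟨τ₀, hτmem, hτ0⟩ : ∃ c ∈ Set.Ioo (1/2 : ℝ) 1, f c = 0 := by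
    have := intermediate_value_Ioo' (by norm_num : (1/2 : ℝ) ≤ 1) hfc.continuousOn
      (show (0:ℝ) ∈ Set.Ioo (f 1) (f (1/2)) from ⟨hone, hhalf⟩)
    obtain ⟨c, hc, hc0⟩ := this
    exact ⟨c, hc, hc0⟩
  have hτpos : 0 < τ₀ := by linarith [hτmem.1]
  have hτlt : τ₀ < 1 := hτmem.2
  have hτfix : Real.tanh (τ₀ * π) = τ₀ := by
    have := hτ0; simp only [hf] at this; linarith
  -- uniqueness of positive fixed points, by strict concavity
  have huniq : ∀ τ : ℝ, 0 < τ → Real.tanh (τ * π) = τ → τ = τ₀ := by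
    intro τ hτ hfixτ
    by_contra hne
    -- wlog via symmetry: two distinct positive fixed points a < b
    rcases lt_or_gt_of_ne hne with h | h
    · -- τ < τ₀ : a = τ, b = τ₀
      have hab : τ < τ₀ := h
      have hcon := strictConcave_my.2 (Set.self_mem_Ici)
        (show τ₀ ∈ Set.Ici (0:ℝ) from hτpos.le)
        (show (0:ℝ) ≠ τ₀ from hτpos.ne)
        (show 0 < 1 - τ / τ₀ by
          have : τ / τ₀ < 1 := (div_lt_one hτpos).2 hab
          linarith)
        (show 0 < τ / τ₀ from div_pos hτ hτpos)
        (by ring)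
      simp only [smul_eq_mul, mul_zero, zero_mul, add_zero, zero_add] at hcon
      rw [div_mul_cancel₀ _ hτpos.ne'] at hcon
      rw [hfixτ, hτfix] at hcon
      rw [div_mul_cancel₀ _ hτpos.ne'] at hcon
      simp only [Real.tanh_zero, mul_zero, zero_add] at hcon
      exact lt_irrefl _ hcon
    · -- τ₀ < τ
      have hab : τ₀ < τ := h
      have hcon := strictConcave_my.2 (Set.self_mem_Ici)
        (show τ ∈ Set.Ici (0:ℝ) from hτ.le)
        (show (0:ℝ) ≠ τ from hτ.ne)
        (show 0 < 1 - τ₀ / τ by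
          have : τ₀ / τ < 1 := (div_lt_one hτ).2 hab
          linarith)
        (show 0 < τ₀ / τ from div_pos hτpos hτ)
        (by ring)
      simp only [smul_eq_mul, mul_zero, zero_mul, add_zero, zero_add] at hcon
      rw [div_mul_cancel₀ _ hτ.ne'] at hcon
      rw [hτfix, hfixτ] at hcon
      rw [div_mul_cancel₀ _ hτ.ne'] at hcon
      simp only [Real.tanh_zero, mul_zero, zero_add] at hcon
      exact lt_irrefl _ hcon
  refine ⟨τ₀, hτpos, hτlt, hτfix, ?_⟩
  intro τ hτne
  constructor
  · intro hfixτ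
    rcases lt_or_gt_of_ne hτne with hneg | hpos
    · right
      have : Real.tanh (-τ * π) = -τ := by
        rw [neg_mul, Real.tanh_neg, hfixτ]
      have := huniq (-τ) (by linarith) this
      linarith
    · left; exact huniq τ hpos hfixτ
  · rintro (rfl | rfl)
    · exact hτfix
    · rw [neg_mul, Real.tanh_neg, hτfix]
end

section
/- For α ∈ [0,1], every φ ∈ X_α(0,1) is the limit in X_α(0,1) of the truncations φ_n defined by φ_n(x) = φ(1/n) for x ∈ (0, 1/n] and φ_n(x) = φ(x) for x ∈ [1/n, 1]; consequently H¹(0,1) is dense in X_α(0,1). -/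
open MeasureTheory Set Real Filter

private lemma neg_log_le_aux (x : ℝ) (hx : 0 < x) : -Real.log x ≤ 2 * x ^ (-(1/2) : ℝ) := by
  have hs : 0 < Real.sqrt x := Real.sqrt_pos.2 hx
  have h1 : Real.log x = 2 * Real.log (Real.sqrt x) := by
    rw [Real.log_sqrt hx.le]; ring
  have h2 : Real.log (Real.sqrt x)⁻¹ ≤ (Real.sqrt x)⁻¹ := by
    have := Real.log_le_sub_one_of_pos (inv_pos.2 hs)
    linarith
  have h3 : (Real.sqrt x)⁻¹ = x ^ (-(1/2) : ℝ) := by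
    rw [Real.sqrt_eq_rpow, ← Real.rpow_neg hx.le]
  rw [← h3]
  rw [Real.log_inv] at h2
  linarith

private lemma integrableOn_log_sub_aux (a : ℝ) (ha0 : 0 < a) (ha1 : a ≤ 1) :
    IntegrableOn (fun x => Real.log a - Real.log x) (Ioo (0:ℝ) a) := by
  have hlog : IntegrableOn Real.log (Ioo (0:ℝ) a) := by
    have hb : IntegrableOn (fun x : ℝ => 2 * x ^ (-(1/2) : ℝ)) (Ioo 0 a) := by
      have h := intervalIntegral.intervalIntegrable_rpow' (a := 0) (b := a) (r := -(1/2)) (by norm_num)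
      rw [intervalIntegrable_iff_integrableOn_Ioo_of_le ha0.le] at h
      exact h.const_mul 2
    refine Integrable.mono' hb Real.measurable_log.aestronglyMeasurable ?_
    refine (ae_restrict_iff' measurableSet_Ioo).2 (ae_of_all _ fun x hx => ?_)
    have hx1 : x ≤ 1 := le_of_lt (lt_of_lt_of_le hx.2 ha1)
    have hlt : Real.log x ≤ 0 := Real.log_nonpos hx.1.le hx1
    rw [Real.norm_eq_abs, abs_of_nonpos hlt]
    exact neg_log_le_aux x hx.1
  exact (integrableOn_const measure_Ioo_lt_top.ne).sub hlog

private lemma integral_log_sub_aux (a : ℝ) (ha0 : 0 < a) (ha1 : a ≤ 1) :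
    ∫ x in Ioo (0:ℝ) a, (Real.log a - Real.log x) = a := by
  have hint := integrableOn_log_sub_aux a ha0 ha1
  have hF : ∀ x ∈ Ioo (0:ℝ) a, HasDerivAt (fun x : ℝ => x * Real.log a - (x * Real.log x - x))
      (Real.log a - Real.log x) x := by
    intro x hx
    have h1 : HasDerivAt (fun x : ℝ => x * Real.log a) (Real.log a) x := by
      simpa using (hasDerivAt_id x).mul_const (Real.log a)
    have h2 := (Real.hasDerivAt_mul_log hx.1.ne').sub (hasDerivAt_id x)
    have h3 := h1.sub h2
    exact h3.congr_deriv (by ring)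
  have hii : IntervalIntegrable (fun x => Real.log a - Real.log x) volume 0 a := by
    rw [intervalIntegrable_iff_integrableOn_Ioo_of_le ha0.le]; exact hint
  have hcF : ContinuousOn (fun x : ℝ => x * Real.log a - (x * Real.log x - x)) (Icc 0 a) :=
    ((continuous_id.mul continuous_const).sub
      (Real.continuous_mul_log.sub continuous_id)).continuousOn
  have key := intervalIntegral.integral_eq_sub_of_hasDeriv_right_of_le ha0.le hcF
    (fun x hx => (hF x hx).hasDerivWithinAt) hii
  rw [intervalIntegral.integral_of_le ha0.le, integral_Ioc_eq_integral_Ioo] at key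
  rw [key]
  simp


private lemma key_bound_aux (α : ℝ) (hα0 : 0 ≤ α) (hα1 : α ≤ 1)
    (φ φ' : ℝ → ℂ)
    (hderiv : ∀ x ∈ Ioo (0:ℝ) 1, HasDerivAt φ (φ' x) x)
    (hcont : ContinuousOn φ (Ioc (0:ℝ) 1))
    (hφ' : IntegrableOn (fun x => x ^ α * ‖φ' x‖ ^ 2) (Ioo (0:ℝ) 1))
    (a : ℝ) (ha0 : 0 < a) (ha1 : a ≤ 1)
    (x : ℝ) (hx0 : 0 < x) (hxa : x < a) :
    ‖φ a - φ x‖ ^ 2 ≤ (Real.log a - Real.log x) *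
      ∫ t in Ioo (0:ℝ) a, t ^ α * ‖φ' t‖ ^ 2 := by
  have hsub : Ioo x a ⊆ Ioo (0:ℝ) 1 := fun t ht => ⟨hx0.trans ht.1, lt_of_lt_of_le ht.2 ha1⟩
  have hgiOo : IntegrableOn (fun t => t ^ α * ‖φ' t‖ ^ 2) (Ioo x a) := hφ'.mono_set hsub
  have hφ'm : AEStronglyMeasurable φ' (volume.restrict (Ioo x a)) := by
    refine (measurable_deriv φ).aestronglyMeasurable.congr ?_
    refine (ae_restrict_iff' measurableSet_Ioo).2 (ae_of_all _ fun t ht => ?_)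
    exact (hderiv t (hsub ht)).deriv
  have hnormm : AEMeasurable (fun t => ‖φ' t‖) (volume.restrict (Ioo x a)) :=
    hφ'm.norm.aemeasurable
  -- integrability of ‖φ'‖²
  have hsq : IntegrableOn (fun t => ‖φ' t‖ ^ 2) (Ioo x a) := by
    refine Integrable.mono' (hgiOo.const_mul (x ^ (-α)))
      ((hnormm.pow_const 2).aestronglyMeasurable) ?_
    refine (ae_restrict_iff' measurableSet_Ioo).2 (ae_of_all _ fun t ht => ?_)
    have ht0 : 0 < t := hx0.trans ht.1
    have hxpos : (0:ℝ) < x ^ α := Real.rpow_pos_of_pos hx0 α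
    have hle : x ^ α ≤ t ^ α := Real.rpow_le_rpow hx0.le ht.1.le hα0
    have h1 : (1:ℝ) ≤ x ^ (-α) * t ^ α := by
      rw [Real.rpow_neg hx0.le, inv_mul_eq_div, le_div_iff₀ hxpos]
      simpa using hle
    rw [Real.norm_of_nonneg (sq_nonneg _)]
    calc ‖φ' t‖ ^ 2 = 1 * ‖φ' t‖ ^ 2 := (one_mul _).symm
      _ ≤ (x ^ (-α) * t ^ α) * ‖φ' t‖ ^ 2 := mul_le_mul_of_nonneg_right h1 (sq_nonneg _)
      _ = x ^ (-α) * (t ^ α * ‖φ' t‖ ^ 2) := by ring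
  -- interval integrability of φ'
  have hφ'i : IntervalIntegrable φ' volume x a := by
    rw [intervalIntegrable_iff_integrableOn_Ioo_of_le hxa.le]
    have hone : IntegrableOn (fun _ : ℝ => (1:ℝ)) (Ioo x a) volume :=
      integrableOn_const measure_Ioo_lt_top.ne
    refine Integrable.mono' (hone.add hsq) hφ'm ?_
    refine ae_of_all _ fun t => ?_
    have h0 := norm_nonneg (φ' t)
    simp only [Pi.add_apply]
    nlinarith [sq_nonneg (‖φ' t‖ - 1)]
  -- FTC
  have hICC : Icc x a ⊆ Ioc (0:ℝ) 1 := fun t ht => ⟨hx0.trans_le ht.1, ht.2.trans ha1⟩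
  have hftc : ∫ t in x..a, φ' t = φ a - φ x :=
    intervalIntegral.integral_eq_sub_of_hasDeriv_right_of_le hxa.le (hcont.mono hICC)
      (fun t ht => (hderiv t (hsub ht)).hasDerivWithinAt) hφ'i
  have hnb : ‖φ a - φ x‖ ≤ ∫ t in Ioo x a, ‖φ' t‖ := by
    rw [← hftc]
    calc ‖∫ t in x..a, φ' t‖ ≤ ∫ t in x..a, ‖φ' t‖ :=
          intervalIntegral.norm_integral_le_integral_norm hxa.le
      _ = ∫ t in Ioo x a, ‖φ' t‖ := by
          rw [intervalIntegral.integral_of_le hxa.le, integral_Ioc_eq_integral_Ioo]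
  -- Cauchy–Schwarz
  set u : ℝ → ℝ := fun t => t ^ (-(α/2)) with hu_def
  set v : ℝ → ℝ := fun t => t ^ (α/2) * ‖φ' t‖ with hv_def
  have hum : AEStronglyMeasurable u (volume.restrict (Ioo x a)) :=
    (measurable_id.pow_const _).aestronglyMeasurable
  have hvm : AEMeasurable v (volume.restrict (Ioo x a)) :=
    (measurable_id.pow_const _).aemeasurable.mul hnormm
  have hu2 : ∀ t ∈ Ioo x a, u t ^ (2:ℕ) = t ^ (-α) := by
    intro t ht
    have ht0 : (0:ℝ) ≤ t := (hx0.trans ht.1).le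
    rw [hu_def]
    rw [← Real.rpow_natCast (t ^ (-(α/2))) 2, ← Real.rpow_mul ht0]
    norm_num
  have hv2 : ∀ t ∈ Ioo x a, v t ^ (2:ℕ) = t ^ α * ‖φ' t‖ ^ 2 := by
    intro t ht
    have ht0 : (0:ℝ) ≤ t := (hx0.trans ht.1).le
    rw [hv_def, mul_pow, ← Real.rpow_natCast (t ^ (α/2)) 2, ← Real.rpow_mul ht0]
    norm_num
  have hrpowi : IntegrableOn (fun t : ℝ => t ^ (-α)) (Ioo x a) := by
    have hc : ContinuousOn (fun t : ℝ => t ^ (-α)) (Icc x a) :=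
      ContinuousOn.rpow_const continuousOn_id
        (fun t ht => Or.inl (ne_of_gt (hx0.trans_le ht.1)))
    exact (hc.integrableOn_compact isCompact_Icc).mono_set Ioo_subset_Icc_self
  have hu2i : IntegrableOn (fun t => u t ^ (2:ℕ)) (Ioo x a) :=
    hrpowi.congr_fun (fun t ht => (hu2 t ht).symm) measurableSet_Ioo
  have hv2i : IntegrableOn (fun t => v t ^ (2:ℕ)) (Ioo x a) :=
    hgiOo.congr_fun (fun t ht => (hv2 t ht).symm) measurableSet_Ioo
  have hu_mem : MemLp u (ENNReal.ofReal 2) (volume.restrict (Ioo x a)) := by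
    rw [ENNReal.ofReal_ofNat]
    exact (memLp_two_iff_integrable_sq hum).2 hu2i
  have hv_mem : MemLp v (ENNReal.ofReal 2) (volume.restrict (Ioo x a)) := by
    rw [ENNReal.ofReal_ofNat]
    exact (memLp_two_iff_integrable_sq hvm.aestronglyMeasurable).2 hv2i
  have hpq : Real.HolderConjugate 2 2 := Real.HolderConjugate.two_two
  have hu_nn : 0 ≤ᵐ[volume.restrict (Ioo x a)] u := by
    refine (ae_restrict_iff' measurableSet_Ioo).2 (ae_of_all _ fun t ht => ?_)
    exact Real.rpow_nonneg (hx0.trans ht.1).le _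
  have hv_nn : 0 ≤ᵐ[volume.restrict (Ioo x a)] v := by
    refine (ae_restrict_iff' measurableSet_Ioo).2 (ae_of_all _ fun t ht => ?_)
    exact mul_nonneg (Real.rpow_nonneg (hx0.trans ht.1).le _) (norm_nonneg _)
  have hCS := integral_mul_le_Lp_mul_Lq_of_nonneg hpq hu_nn hv_nn hu_mem hv_mem
  set A : ℝ := ∫ t in Ioo x a, t ^ (-α) with hA_def
  set B : ℝ := ∫ t in Ioo x a, t ^ α * ‖φ' t‖ ^ 2 with hB_def
  have hA0 : 0 ≤ A := setIntegral_nonneg measurableSet_Ioo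
    (fun t ht => Real.rpow_nonneg (hx0.trans ht.1).le _)
  have hB0 : 0 ≤ B := setIntegral_nonneg measurableSet_Ioo
    (fun t ht => mul_nonneg (Real.rpow_nonneg (hx0.trans ht.1).le _) (sq_nonneg _))
  have hCS' : ∫ t in Ioo x a, ‖φ' t‖ ≤ A ^ ((1:ℝ)/2) * B ^ ((1:ℝ)/2) := by
    have e1 : ∫ t in Ioo x a, u t * v t = ∫ t in Ioo x a, ‖φ' t‖ := by
      refine setIntegral_congr_fun measurableSet_Ioo (fun t ht => ?_)
      have ht0 : 0 < t := hx0.trans ht.1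
      show u t * v t = ‖φ' t‖
      rw [hu_def, hv_def]
      have : t ^ (-(α/2)) * (t ^ (α/2) * ‖φ' t‖) = (t ^ (-(α/2)) * t ^ (α/2)) * ‖φ' t‖ := by
        ring
      rw [this, ← Real.rpow_add ht0]
      norm_num
    have e2 : ∫ t in Ioo x a, u t ^ (2:ℝ) = A := by
      refine setIntegral_congr_fun measurableSet_Ioo (fun t ht => ?_)
      show u t ^ (2:ℝ) = t ^ (-α)
      rw [Real.rpow_two]
      exact hu2 t ht
    have e3 : ∫ t in Ioo x a, v t ^ (2:ℝ) = B := by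
      refine setIntegral_congr_fun measurableSet_Ioo (fun t ht => ?_)
      show v t ^ (2:ℝ) = t ^ α * ‖φ' t‖ ^ 2
      rw [Real.rpow_two]
      exact hv2 t ht
    calc ∫ t in Ioo x a, ‖φ' t‖ = ∫ t in Ioo x a, u t * v t := e1.symm
      _ ≤ (∫ t in Ioo x a, u t ^ (2:ℝ)) ^ ((1:ℝ)/2) *
            (∫ t in Ioo x a, v t ^ (2:ℝ)) ^ ((1:ℝ)/2) := hCS
      _ = A ^ ((1:ℝ)/2) * B ^ ((1:ℝ)/2) := by rw [e2, e3]
  -- A ≤ log a - log x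
  have hinv_i : IntegrableOn (fun t : ℝ => t⁻¹) (Ioo x a) := by
    have hc : ContinuousOn (fun t : ℝ => t⁻¹) (Icc x a) :=
      continuousOn_id.inv₀ (fun t ht => ne_of_gt (hx0.trans_le ht.1))
    exact (hc.integrableOn_compact isCompact_Icc).mono_set Ioo_subset_Icc_self
  have hAle : A ≤ Real.log a - Real.log x := by
    have h1 : A ≤ ∫ t in Ioo x a, t⁻¹ := by
      refine setIntegral_mono_on hrpowi hinv_i measurableSet_Ioo (fun t ht => ?_)
      have ht0 : 0 < t := hx0.trans ht.1
      have ht1 : t ≤ 1 := le_of_lt (lt_of_lt_of_le ht.2 ha1)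
      have := Real.rpow_le_rpow_of_exponent_ge ht0 ht1 (neg_le_neg hα1)
      rwa [Real.rpow_neg_one] at this
    have h2 : ∫ t in Ioo x a, t⁻¹ = Real.log a - Real.log x := by
      rw [← integral_Ioc_eq_integral_Ioo, ← intervalIntegral.integral_of_le hxa.le,
        integral_inv_of_pos hx0 (hx0.trans hxa),
        Real.log_div (ne_of_gt (hx0.trans hxa)) (ne_of_gt hx0)]
    linarith
  -- B ≤ ∫ over Ioo 0 a
  have hBle : B ≤ ∫ t in Ioo (0:ℝ) a, t ^ α * ‖φ' t‖ ^ 2 := by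
    refine setIntegral_mono_set (hφ'.mono_set ?_) ?_ ?_
    · exact fun t ht => ⟨ht.1, lt_of_lt_of_le ht.2 ha1⟩
    · refine (ae_restrict_iff' measurableSet_Ioo).2 (ae_of_all _ fun t ht => ?_)
      exact mul_nonneg (Real.rpow_nonneg ht.1.le _) (sq_nonneg _)
    · exact HasSubset.Subset.eventuallyLE (fun t ht => ⟨hx0.trans ht.1, ht.2⟩)
  have hIntNorm0 : 0 ≤ ∫ t in Ioo x a, ‖φ' t‖ :=
    setIntegral_nonneg measurableSet_Ioo (fun t _ => norm_nonneg _)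
  have hsq_half : (A ^ ((1:ℝ)/2) * B ^ ((1:ℝ)/2)) ^ (2:ℕ) = A * B := by
    rw [mul_pow, ← Real.rpow_natCast (A ^ ((1:ℝ)/2)) 2, ← Real.rpow_natCast (B ^ ((1:ℝ)/2)) 2,
      ← Real.rpow_mul hA0, ← Real.rpow_mul hB0]
    norm_num
  have hlogpos : 0 ≤ Real.log a - Real.log x := by
    have := Real.log_le_log hx0 hxa.le
    linarith
  calc ‖φ a - φ x‖ ^ 2 ≤ (∫ t in Ioo x a, ‖φ' t‖) ^ 2 :=
        pow_le_pow_left₀ (norm_nonneg _) hnb 2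
    _ ≤ (A ^ ((1:ℝ)/2) * B ^ ((1:ℝ)/2)) ^ 2 := pow_le_pow_left₀ hIntNorm0 hCS' 2
    _ = A * B := hsq_half
    _ ≤ (Real.log a - Real.log x) * ∫ t in Ioo (0:ℝ) a, t ^ α * ‖φ' t‖ ^ 2 :=
        mul_le_mul hAle hBle hB0 hlogpos


/-- For `α ∈ [0,1]`, the truncations `φ_n(x) = φ(max x (1/n))` of any `φ ∈ X_α(0,1)`
belong to `H¹(0,1)` and converge to `φ` in the `X_α(0,1)` norm; consequently
`H¹(0,1)` is dense in `X_α(0,1)`. The derivative of `φ_n` is `0` on `(0,1/n)`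
and `φ'` on `(1/n,1)`. -/
theorem stmt_19 (α : ℝ) (hα0 : 0 ≤ α) (hα1 : α ≤ 1)
    (φ φ' : ℝ → ℂ)
    (hderiv : ∀ x ∈ Ioo (0:ℝ) 1, HasDerivAt φ (φ' x) x)
    (hcont : ContinuousOn φ (Ioc (0:ℝ) 1))
    (hφ : IntegrableOn (fun x => ‖φ x‖ ^ 2) (Ioo (0:ℝ) 1))
    (hφ' : IntegrableOn (fun x => x ^ α * ‖φ' x‖ ^ 2) (Ioo (0:ℝ) 1)) :
    (∀ n : ℕ, 1 ≤ n →
      IntegrableOn (fun x => ‖(if x < 1/(n:ℝ) then (0:ℂ) else φ' x)‖ ^ 2)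
        (Ioo (0:ℝ) 1)) ∧
    Tendsto (fun n : ℕ =>
      (∫ x in Ioo (0:ℝ) 1, ‖φ (max x (1/(n:ℝ))) - φ x‖ ^ 2) +
        ∫ x in Ioo (0:ℝ) 1,
          x ^ α * ‖(if x < 1/(n:ℝ) then (0:ℂ) else φ' x) - φ' x‖ ^ 2)
      atTop (nhds 0) := by
  have hφ'm : AEStronglyMeasurable φ' (volume.restrict (Ioo (0:ℝ) 1)) := by
    refine (measurable_deriv φ).aestronglyMeasurable.congr ?_
    refine (ae_restrict_iff' measurableSet_Ioo).2 (ae_of_all _ fun t ht => ?_)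
    exact (hderiv t ht).deriv
  have hna : ∀ n : ℕ, 1 ≤ n → (0:ℝ) < 1/(n:ℝ) ∧ 1/(n:ℝ) ≤ 1 := by
    intro n hn
    have hn0 : (0:ℝ) < n := by exact_mod_cast Nat.lt_of_lt_of_le Nat.zero_lt_one hn
    have hn1 : (1:ℝ) ≤ n := by exact_mod_cast hn
    exact ⟨by positivity, by rw [div_le_one hn0]; exact hn1⟩
  constructor
  · -- integrability of truncated derivative
    intro n hn
    obtain ⟨ha0, _⟩ := hna n hn
    have hn0 : (0:ℝ) < n := by exact_mod_cast Nat.lt_of_lt_of_le Nat.zero_lt_one hn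
    have heq : (fun x => ‖(if x < 1/(n:ℝ) then (0:ℂ) else φ' x)‖ ^ 2)
        = fun x => ‖(Ici (1/(n:ℝ))).indicator φ' x‖ ^ 2 := by
      funext x
      by_cases h : x < 1/(n:ℝ)
      · rw [if_pos h, Set.indicator_of_notMem (by simpa using h)]
      · rw [if_neg h, Set.indicator_of_mem (by simpa using not_lt.1 h)]
    rw [heq]
    refine Integrable.mono' (hφ'.const_mul ((n:ℝ) ^ α))
      (((hφ'm.indicator measurableSet_Ici).norm.aemeasurable.pow_const 2).aestronglyMeasurable) ?_
    refine (ae_restrict_iff' measurableSet_Ioo).2 (ae_of_all _ fun x hx => ?_)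
    rw [Real.norm_of_nonneg (sq_nonneg _)]
    by_cases h : x < 1/(n:ℝ)
    · rw [Set.indicator_of_notMem (by simpa using h)]
      have : (0:ℝ) ≤ (n:ℝ) ^ α * (x ^ α * ‖φ' x‖ ^ 2) :=
        mul_nonneg (Real.rpow_nonneg hn0.le _)
          (mul_nonneg (Real.rpow_nonneg hx.1.le _) (sq_nonneg _))
      simpa using this
    · rw [Set.indicator_of_mem (by simpa using not_lt.1 h)]
      have hnx : (1:ℝ) ≤ (n:ℝ) * x := by
        have h1 : 1/(n:ℝ) ≤ x := not_lt.1 h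
        rw [div_le_iff₀ hn0] at h1
        linarith [h1]
      have h1 : (1:ℝ) ≤ (n:ℝ) ^ α * x ^ α := by
        rw [← Real.mul_rpow hn0.le hx.1.le]
        calc (1:ℝ) = (1:ℝ) ^ α := (Real.one_rpow α).symm
          _ ≤ ((n:ℝ) * x) ^ α := Real.rpow_le_rpow zero_le_one hnx hα0
      nlinarith [mul_le_mul_of_nonneg_right h1 (sq_nonneg ‖φ' x‖)]
  · -- convergence
    set g : ℝ → ℝ := fun t => t ^ α * ‖φ' t‖ ^ 2 with hg_def
    set ε : ℕ → ℝ := fun n => ∫ x in Ioo (0:ℝ) 1, (Ioo (0:ℝ) (1/(n:ℝ))).indicator g x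
      with hε_def
    have hεlim : Tendsto ε atTop (nhds 0) := by
      have key := tendsto_integral_of_dominated_convergence (μ := volume.restrict (Ioo (0:ℝ) 1))
        (F := fun (n : ℕ) x => (Ioo (0:ℝ) (1/(n:ℝ))).indicator g x) (f := fun _ => (0:ℝ))
        (bound := fun x => ‖g x‖)
        (fun n => hφ'.aestronglyMeasurable.indicator measurableSet_Ioo)
        hφ'.norm
        (fun n => ae_of_all _ fun x => by
          simpa using norm_indicator_le_norm_self (s := Ioo (0:ℝ) (1/(n:ℝ))) (f := g) (a := x))
        ?_
      · simp only [integral_zero] at key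
        exact key
      · refine (ae_restrict_iff' measurableSet_Ioo).2 (ae_of_all _ fun x hx => ?_)
        have h1 : ∀ᶠ n : ℕ in atTop, 1/(n:ℝ) < x :=
          tendsto_one_div_atTop_nhds_zero_nat.eventually (gt_mem_nhds hx.1)
        refine Tendsto.congr' ?_ tendsto_const_nhds
        filter_upwards [h1] with n hn
        exact (Set.indicator_of_notMem (fun hmem => absurd hmem.2 (not_lt.2 hn.le)) g).symm
    have hε_eq : ∀ n : ℕ, 1 ≤ n → ε n = ∫ t in Ioo (0:ℝ) (1/(n:ℝ)), g t := by
      intro n hn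
      obtain ⟨ha0, ha1⟩ := hna n hn
      simp only [hε_def]
      rw [integral_indicator measurableSet_Ioo, Measure.restrict_restrict measurableSet_Ioo,
        Set.inter_eq_left.2 (show Ioo (0:ℝ) (1/(n:ℝ)) ⊆ Ioo (0:ℝ) 1 from
          fun t ht => ⟨ht.1, lt_of_lt_of_le ht.2 ha1⟩)]
    have hε0 : ∀ n : ℕ, 1 ≤ n → 0 ≤ ε n := by
      intro n hn
      rw [hε_eq n hn]
      exact setIntegral_nonneg measurableSet_Ioo
        (fun t ht => mul_nonneg (Real.rpow_nonneg ht.1.le _) (sq_nonneg _))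
    have hJ : ∀ n : ℕ, 1 ≤ n →
        (∫ x in Ioo (0:ℝ) 1, x ^ α * ‖(if x < 1/(n:ℝ) then (0:ℂ) else φ' x) - φ' x‖ ^ 2)
          = ε n := by
      intro n hn
      simp only [hε_def]
      refine setIntegral_congr_fun measurableSet_Ioo (fun x hx => ?_)
      by_cases h : x < 1/(n:ℝ)
      · rw [if_pos h,
          Set.indicator_of_mem (show x ∈ Ioo (0:ℝ) (1/(n:ℝ)) from ⟨hx.1, h⟩) g]
        simp [hg_def]
      · rw [if_neg h, Set.indicator_of_notMem (fun hmem => h hmem.2)]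
        simp
    have hI : ∀ n : ℕ, 1 ≤ n →
        (∫ x in Ioo (0:ℝ) 1, ‖φ (max x (1/(n:ℝ))) - φ x‖ ^ 2) ≤ ε n := by
      intro n hn
      obtain ⟨ha0, ha1⟩ := hna n hn
      have hstep1 : (∫ x in Ioo (0:ℝ) 1, ‖φ (max x (1/(n:ℝ))) - φ x‖ ^ 2)
          = ∫ x in Ioo (0:ℝ) 1,
              (Ioo (0:ℝ) (1/(n:ℝ))).indicator (fun x => ‖φ (1/(n:ℝ)) - φ x‖ ^ 2) x := by
        refine setIntegral_congr_fun measurableSet_Ioo (fun x hx => ?_)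
        by_cases h : x < 1/(n:ℝ)
        · rw [max_eq_right h.le,
            Set.indicator_of_mem (show x ∈ Ioo (0:ℝ) (1/(n:ℝ)) from ⟨hx.1, h⟩)
              (fun x => ‖φ (1/(n:ℝ)) - φ x‖ ^ 2)]
        · rw [max_eq_left (not_lt.1 h), Set.indicator_of_notMem (fun hmem => h hmem.2)]
          simp
      have hstep2 : (∫ x in Ioo (0:ℝ) 1,
            (Ioo (0:ℝ) (1/(n:ℝ))).indicator (fun x => ‖φ (1/(n:ℝ)) - φ x‖ ^ 2) x)
          = ∫ x in Ioo (0:ℝ) (1/(n:ℝ)), ‖φ (1/(n:ℝ)) - φ x‖ ^ 2 := by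
        rw [integral_indicator measurableSet_Ioo, Measure.restrict_restrict measurableSet_Ioo,
          Set.inter_eq_left.2 (show Ioo (0:ℝ) (1/(n:ℝ)) ⊆ Ioo (0:ℝ) 1 from
          fun t ht => ⟨ht.1, lt_of_lt_of_le ht.2 ha1⟩)]
      have hC0 : 0 ≤ ∫ t in Ioo (0:ℝ) (1/(n:ℝ)), g t := setIntegral_nonneg measurableSet_Ioo
        (fun t ht => mul_nonneg (Real.rpow_nonneg ht.1.le _) (sq_nonneg _))
      have hbound : (∫ x in Ioo (0:ℝ) (1/(n:ℝ)), ‖φ (1/(n:ℝ)) - φ x‖ ^ 2)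
          ≤ ∫ x in Ioo (0:ℝ) (1/(n:ℝ)),
              (Real.log (1/(n:ℝ)) - Real.log x) * (∫ t in Ioo (0:ℝ) (1/(n:ℝ)), g t) := by
        refine integral_mono_of_nonneg (ae_of_all _ fun x => sq_nonneg _)
          ((integrableOn_log_sub_aux (1/(n:ℝ)) ha0 ha1).mul_const _) ?_
        refine (ae_restrict_iff' measurableSet_Ioo).2 (ae_of_all _ fun x hx => ?_)
        exact key_bound_aux α hα0 hα1 φ φ' hderiv hcont hφ' (1/(n:ℝ)) ha0 ha1 x hx.1 hx.2
      have hval : (∫ x in Ioo (0:ℝ) (1/(n:ℝ)),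
            (Real.log (1/(n:ℝ)) - Real.log x) * (∫ t in Ioo (0:ℝ) (1/(n:ℝ)), g t))
          = (1/(n:ℝ)) * ∫ t in Ioo (0:ℝ) (1/(n:ℝ)), g t := by
        rw [integral_mul_const, integral_log_sub_aux (1/(n:ℝ)) ha0 ha1]
      have hfin : (1/(n:ℝ)) * (∫ t in Ioo (0:ℝ) (1/(n:ℝ)), g t)
          ≤ ∫ t in Ioo (0:ℝ) (1/(n:ℝ)), g t := by
        nlinarith
      rw [hstep1, hstep2, hε_eq n hn]
      linarith [hbound, hval ▸ hbound]
    have h2ε : Tendsto (fun n => 2 * ε n) atTop (nhds 0) := by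
      have h := hεlim.const_mul 2
      simpa only [mul_zero] using h
    refine tendsto_of_tendsto_of_tendsto_of_le_of_le' tendsto_const_nhds h2ε ?_ ?_
    · filter_upwards [eventually_ge_atTop 1] with n hn
      have hI0 : 0 ≤ ∫ x in Ioo (0:ℝ) 1, ‖φ (max x (1/(n:ℝ))) - φ x‖ ^ 2 :=
        setIntegral_nonneg measurableSet_Ioo fun x _ => sq_nonneg _
      have hJ0 : 0 ≤ ∫ x in Ioo (0:ℝ) 1,
          x ^ α * ‖(if x < 1/(n:ℝ) then (0:ℂ) else φ' x) - φ' x‖ ^ 2 :=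
        setIntegral_nonneg measurableSet_Ioo fun x hx =>
          mul_nonneg (Real.rpow_nonneg hx.1.le _) (sq_nonneg _)
      linarith
    · filter_upwards [eventually_ge_atTop 1] with n hn
      have h1 := hI n hn
      have h2 := hJ n hn
      have h3 := hε0 n hn
      rw [h2]
      linarith
end
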